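/- arXiv:2502.08506 — 5 statements merged into one kernel-verified Lean document; each statement's English description precedes it below -/
import Mathlib

section
/- Let I, J₀, J₁ be ideals on an infinite set X. Then cof_{J₀∩J₁}(I) = max{cof_{J₀}(I), cof_{J₁}(I)}. -/
open Cardinal Set

def IsIdealOn {X : Type*} (I : Set (Set X)) : Prop :=
  (∀ A ∈ I, ∀ B, B ⊆ A → B ∈ I) ∧
  (∀ A ∈ I, ∀ B ∈ I, A ∪ B ∈ I) ∧
  (Set.univ : Set X) ∉ I ∧
  (∀ A : Set X, A.Finite → A ∈ I)

/-- `relCof J I`: least cardinality of a family `𝒜 ⊆ I` such that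
every `I₀ ∈ I` satisfies `I₀ \ A ∈ J` for some `A ∈ 𝒜`. -/
noncomputable def relCof {X : Type*} (J I : Set (Set X)) : Cardinal :=
  sInf {c | ∃ 𝒜 : Set (Set X), 𝒜 ⊆ I ∧ Cardinal.mk 𝒜 = c ∧
    ∀ I₀ ∈ I, ∃ A ∈ 𝒜, I₀ \ A ∈ J}


/-!
Shrinking the ideal `J` can only raise `relCof J I`, which gives `≥`. Conversely, if `𝒜₀` and
`𝒜₁` witness `relCof J₀ I` and `relCof J₁ I`, the unions `A₀ ∪ A₁` witness
`relCof (J₀ ∩ J₁) I ≤ relCof J₀ I * relCof J₁ I`. This product is the maximum because each factor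
is either infinite or at most `1`: a finite witness can be merged into the single set `⋃₀ 𝒜`,
which still lies in `I`.
-/

namespace IsIdealOn

variable {X : Type*} {I : Set (Set X)}

theorem empty_mem (hI : IsIdealOn I) : ∅ ∈ I :=
  hI.2.2.2 ∅ finite_empty

theorem union_mem (hI : IsIdealOn I) {A B : Set X} (hA : A ∈ I) (hB : B ∈ I) : A ∪ B ∈ I :=
  hI.2.1 A hA B hB

theorem sUnion_mem (hI : IsIdealOn I) {𝒜 : Set (Set X)} (hfin : 𝒜.Finite) (h𝒜 : 𝒜 ⊆ I) :
    ⋃₀ 𝒜 ∈ I := by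
  induction 𝒜, hfin using Set.Finite.induction_on with
  | empty => simpa using hI.empty_mem
  | @insert A 𝒜 _ _ ih =>
    rw [sUnion_insert]
    exact hI.union_mem (h𝒜 (mem_insert A 𝒜)) (ih ((subset_insert A 𝒜).trans h𝒜))

theorem diff_mem_of_subset (hI : IsIdealOn I) {I₀ A B : Set X} (h : I₀ \ A ∈ I) (hAB : A ⊆ B) :
    I₀ \ B ∈ I :=
  hI.1 _ h _ (sdiff_subset_sdiff_right hAB)

end IsIdealOn

section relCof

variable {X : Type*} {I J J' : Set (Set X)}

theorem relCof_le_mk {𝒜 : Set (Set X)} (h𝒜 : 𝒜 ⊆ I) (hcov : ∀ I₀ ∈ I, ∃ A ∈ 𝒜, I₀ \ A ∈ J) :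
    relCof J I ≤ #𝒜 :=
  csInf_le' ⟨𝒜, h𝒜, rfl, hcov⟩

theorem exists_mk_eq_relCof (hJ : ∅ ∈ J) :
    ∃ 𝒜 ⊆ I, #𝒜 = relCof J I ∧ ∀ I₀ ∈ I, ∃ A ∈ 𝒜, I₀ \ A ∈ J :=
  csInf_mem (s := {c | ∃ 𝒜 : Set (Set X), 𝒜 ⊆ I ∧ #𝒜 = c ∧ ∀ I₀ ∈ I, ∃ A ∈ 𝒜, I₀ \ A ∈ J})
    ⟨#I, I, subset_rfl, rfl, fun I₀ hI₀ => ⟨I₀, hI₀, by rwa [sdiff_self]⟩⟩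

theorem relCof_anti (hJJ' : J ⊆ J') (hJ : ∅ ∈ J) : relCof J' I ≤ relCof J I := by
  obtain ⟨𝒜, h𝒜, hcard, hcov⟩ := exists_mk_eq_relCof (I := I) hJ
  rw [← hcard]
  refine relCof_le_mk h𝒜 fun I₀ hI₀ => ?_
  obtain ⟨A, hA, hdiff⟩ := hcov I₀ hI₀
  exact ⟨A, hA, hJJ' hdiff⟩

theorem relCof_le_one_or_aleph0_le (hI : IsIdealOn I) (hJ : IsIdealOn J) :
    relCof J I ≤ 1 ∨ ℵ₀ ≤ relCof J I := by
  refine (lt_or_ge (relCof J I) ℵ₀).imp_left fun hlt => ?_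
  obtain ⟨𝒜, h𝒜, hcard, hcov⟩ := exists_mk_eq_relCof (I := I) hJ.empty_mem
  have hfin : 𝒜.Finite := lt_aleph0_iff_set_finite.mp (hcard ▸ hlt)
  calc relCof J I ≤ #({⋃₀ 𝒜} : Set (Set X)) := by
        refine relCof_le_mk (singleton_subset_iff.mpr (hI.sUnion_mem hfin h𝒜)) fun I₀ hI₀ => ?_
        obtain ⟨A, hA, hdiff⟩ := hcov I₀ hI₀
        exact ⟨⋃₀ 𝒜, rfl, hJ.diff_mem_of_subset hdiff (subset_sUnion_of_mem hA)⟩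
    _ = 1 := mk_singleton _

theorem relCof_inter_le_mul {J₀ J₁ : Set (Set X)} (hI : IsIdealOn I) (hJ₀ : IsIdealOn J₀)
    (hJ₁ : IsIdealOn J₁) : relCof (J₀ ∩ J₁) I ≤ relCof J₀ I * relCof J₁ I := by
  obtain ⟨𝒜₀, h𝒜₀, hcard₀, hcov₀⟩ := exists_mk_eq_relCof (I := I) hJ₀.empty_mem
  obtain ⟨𝒜₁, h𝒜₁, hcard₁, hcov₁⟩ := exists_mk_eq_relCof (I := I) hJ₁.empty_mem
  have hcover : relCof (J₀ ∩ J₁) I ≤ #(image2 (· ∪ ·) 𝒜₀ 𝒜₁) := by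
    refine relCof_le_mk ?_ fun I₀ hI₀ => ?_
    · rintro _ ⟨A₀, hA₀, A₁, hA₁, rfl⟩
      exact hI.union_mem (h𝒜₀ hA₀) (h𝒜₁ hA₁)
    · obtain ⟨A₀, hA₀, hdiff₀⟩ := hcov₀ I₀ hI₀
      obtain ⟨A₁, hA₁, hdiff₁⟩ := hcov₁ I₀ hI₀
      exact ⟨A₀ ∪ A₁, mem_image2_of_mem hA₀ hA₁,
        hJ₀.diff_mem_of_subset hdiff₀ subset_union_left,
        hJ₁.diff_mem_of_subset hdiff₁ subset_union_right⟩
  calc relCof (J₀ ∩ J₁) I ≤ #(image2 (· ∪ ·) 𝒜₀ 𝒜₁) := hcover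
    _ ≤ #(𝒜₀ ×ˢ 𝒜₁) := by rw [← image_prod]; exact mk_image_le
    _ = relCof J₀ I * relCof J₁ I := by rw [mk_setProd, hcard₀, hcard₁]

end relCof

theorem Cardinal.mul_le_max_of_le_one_or_aleph0_le {a : Cardinal} (b : Cardinal)
    (ha : a ≤ 1 ∨ ℵ₀ ≤ a) : a * b ≤ max a b := by
  rcases ha with ha | ha
  · calc a * b ≤ 1 * b := mul_le_mul_left ha b
      _ = b := one_mul b
      _ ≤ max a b := le_max_right a b
  · calc a * b ≤ max (max a b) ℵ₀ := mul_le_max a b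
      _ = max a b := max_eq_left (ha.trans (le_max_left a b))

theorem stmt10_general {X : Type*} (I J₀ J₁ : Set (Set X))
    (hI : IsIdealOn I) (hJ₀ : IsIdealOn J₀) (hJ₁ : IsIdealOn J₁) :
    relCof (J₀ ∩ J₁) I = max (relCof J₀ I) (relCof J₁ I) := by
  have hempty : ∅ ∈ J₀ ∩ J₁ := ⟨hJ₀.empty_mem, hJ₁.empty_mem⟩
  refine le_antisymm ?_
    (max_le (relCof_anti inter_subset_left hempty) (relCof_anti inter_subset_right hempty))
  calc relCof (J₀ ∩ J₁) I ≤ relCof J₀ I * relCof J₁ I := relCof_inter_le_mul hI hJ₀ hJ₁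
    _ ≤ max (relCof J₀ I) (relCof J₁ I) :=
      mul_le_max_of_le_one_or_aleph0_le _ (relCof_le_one_or_aleph0_le hI hJ₀)

theorem stmt10 {X : Type*} [Infinite X] (I J₀ J₁ : Set (Set X))
    (hI : IsIdealOn I) (hJ₀ : IsIdealOn J₀) (hJ₁ : IsIdealOn J₁) :
    relCof (J₀ ∩ J₁) I = max (relCof J₀ I) (relCof J₁ I) :=
  stmt10_general I J₀ J₁ hI hJ₀ hJ₁
end

section
/- Let ED = {I ⊆ ω×ω : there is k such that all but finitely many columns of I have size < k} and Fin×∅ = {I ⊆ ω×ω : all but finitely many columns of I are empty}. Then cof_{Fin×∅}(ED) = 𝔠, the cardinality of the continuum. -/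
open Cardinal Set

/-- `Fin×∅`: all but finitely many columns are empty. -/
def finTimesEmpty : Set (Set (ℕ × ℕ)) :=
  {S | {n | ∃ m, (n, m) ∈ S}.Finite}

/-- `ED`: for some `k`, all but finitely many columns have size `< k`. -/
def idealED : Set (Set (ℕ × ℕ)) :=
  {S | ∃ k : ℕ, {n | ¬ Cardinal.mk {m | (n, m) ∈ S} < k}.Finite}

/-- Code of the first `n` bits of `x` as a natural number. -/
def bcode (x : ℕ → Bool) : ℕ → ℕ
  | 0 => 0
  | n + 1 => bcode x n + if x n then 2 ^ n else 0

lemma bcode_lt (x : ℕ → Bool) (n : ℕ) : bcode x n < 2 ^ n := by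
  induction n with
  | zero => simp [bcode]
  | succ n ih =>
    have : (if x n then 2 ^ n else 0) ≤ 2 ^ n := by split <;> omega
    simp only [bcode, pow_succ]
    omega

lemma bcode_inj {x y : ℕ → Bool} {n : ℕ} (h : bcode x n = bcode y n) :
    ∀ i < n, x i = y i := by
  induction n with
  | zero => intro i hi; omega
  | succ n ih =>
    have hx := bcode_lt x n
    have hy := bcode_lt y n
    have hxy : x n = y n := by
      by_contra hne
      cases hxn : x n <;> cases hyn : y n <;>
        simp [bcode, hxn, hyn] at h hne <;> omega
    have h' : bcode x n = bcode y n := by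
      simp only [bcode, hxy] at h; omega
    intro i hi
    rcases Nat.lt_succ_iff_lt_or_eq.mp hi with h'' | h''
    · exact ih h' i h''
    · subst h''; exact hxy

/-- The graph of `n ↦ bcode x n`. -/
def graphI (x : ℕ → Bool) : Set (ℕ × ℕ) := {p | p.2 = bcode x p.1}

lemma graphI_mem (x : ℕ → Bool) : graphI x ∈ idealED := by
  refine ⟨2, ?_⟩
  have : {n : ℕ | ¬ Cardinal.mk {m | (n, m) ∈ graphI x} < (2 : ℕ)} = ∅ := by
    ext n
    simp only [mem_setOf_eq, mem_empty_iff_false, iff_false, not_not]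
    have : {m | (n, m) ∈ graphI x} = {bcode x n} := by
      ext m; simp [graphI]
    rw [this, Cardinal.mk_singleton]
    norm_num
  rw [this]; exact finite_empty

/-- Each set in `idealED` captures (mod `finTimesEmpty`) only countably many graphs. -/
lemma captured_countable {A : Set (ℕ × ℕ)} (hA : A ∈ idealED) :
    {x : ℕ → Bool | graphI x \ A ∈ finTimesEmpty}.Countable := by
  classical
  obtain ⟨k, hk⟩ := hA
  -- bound for the exceptional columns
  obtain ⟨M, hM⟩ := hk.bddAbove
  have hcol : ∀ n, M < n → Cardinal.mk {m | (n, m) ∈ A} < k := by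
    intro n hn
    by_contra hcon
    exact absurd (hM hcon) (by omega)
  -- the union decomposition
  have hsub : {x : ℕ → Bool | graphI x \ A ∈ finTimesEmpty} ⊆
      ⋃ N : ℕ, {x : ℕ → Bool | ∀ n ≥ N, (n, bcode x n) ∈ A} := by
    intro x hx
    have hfin : {n : ℕ | (n, bcode x n) ∉ A}.Finite := by
      have : {n : ℕ | (n, bcode x n) ∉ A} ⊆ {n | ∃ m, (n, m) ∈ graphI x \ A} := by
        intro n hn
        exact ⟨bcode x n, by simp [graphI], hn⟩
      exact Finite.subset hx this
    obtain ⟨N, hN⟩ := hfin.bddAbove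
    refine mem_iUnion.mpr ⟨N + 1, fun n hn => ?_⟩
    by_contra hcon
    exact absurd (hN hcon) (by omega)
  refine Set.Countable.mono hsub (countable_iUnion fun N => Set.Finite.countable ?_)
  -- each piece is finite
  by_contra hinf
  obtain ⟨t, hts, htc⟩ := Set.Infinite.exists_subset_card_eq hinf (k + 1)
  -- a level separating all elements of t
  set sep : (ℕ → Bool) → (ℕ → Bool) → ℕ := fun x y =>
    if h : x = y then 0 else Classical.choose (Function.ne_iff.mp h)
  have hsep : ∀ x y : ℕ → Bool, x ≠ y → x (sep x y) ≠ y (sep x y) := by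
    intro x y h
    simp only [sep, dif_neg h]
    exact Classical.choose_spec (Function.ne_iff.mp h)
  set n0 : ℕ := (t ×ˢ t).sup (fun p => sep p.1 p.2) + 1
  set n : ℕ := N + M + n0 + 1
  -- the images at level n are distinct
  have hinj : Set.InjOn (fun x => bcode x n) ↑t := by
    intro x hx y hy hxy
    by_contra hne
    have hlt : sep x y < n := by
      have hmemprod : (x, y) ∈ t ×ˢ t :=
        Finset.mem_product.mpr ⟨Finset.mem_coe.mp hx, Finset.mem_coe.mp hy⟩
      have := Finset.le_sup (f := fun p : (ℕ → Bool) × (ℕ → Bool) => sep p.1 p.2) hmemprod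
      simp only [n, n0] at *
      omega
    exact hsep x y hne (bcode_inj hxy (sep x y) hlt)
  have himg : (t.image (fun x => bcode x n)).card = k + 1 := by
    rw [Finset.card_image_of_injOn hinj, htc]
  -- the images land in the n-th column of A
  have hsubcol : ↑(t.image (fun x => bcode x n)) ⊆ {m | (n, m) ∈ A} := by
    intro m hm
    simp only [Finset.coe_image, mem_image, Finset.mem_coe] at hm
    obtain ⟨x, hx, rfl⟩ := hm
    exact hts hx n (by omega)
  have hle : ((k + 1 : ℕ) : Cardinal) ≤ Cardinal.mk {m | (n, m) ∈ A} := by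
    calc ((k + 1 : ℕ) : Cardinal) = Cardinal.mk ↑(t.image (fun x => bcode x n)) := by
          rw [Cardinal.mk_coe_finset, himg]
      _ ≤ Cardinal.mk {m | (n, m) ∈ A} := Cardinal.mk_le_mk_of_subset hsubcol
  have hlt := hcol n (by omega)
  have : ((k + 1 : ℕ) : Cardinal) < ((k : ℕ) : Cardinal) := lt_of_le_of_lt hle hlt
  rw [Nat.cast_lt] at this
  omega

lemma empty_mem_fte : (∅ : Set (ℕ × ℕ)) ∈ finTimesEmpty := by
  simp [finTimesEmpty]

theorem stmt15 : relCof finTimesEmpty idealED = Cardinal.continuum := by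
  classical
  have hmem : Cardinal.mk ↥idealED ∈ {c | ∃ 𝒜 : Set (Set (ℕ × ℕ)), 𝒜 ⊆ idealED ∧
      Cardinal.mk 𝒜 = c ∧ ∀ I₀ ∈ idealED, ∃ A ∈ 𝒜, I₀ \ A ∈ finTimesEmpty} :=
    ⟨idealED, subset_rfl, rfl, fun I₀ hI₀ => ⟨I₀, hI₀, by simpa using empty_mem_fte⟩⟩
  apply le_antisymm
  · refine le_trans (csInf_le' hmem) ?_
    calc Cardinal.mk ↥idealED ≤ Cardinal.mk (Set (ℕ × ℕ)) := Cardinal.mk_set_le _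
      _ = 2 ^ Cardinal.mk (ℕ × ℕ) := Cardinal.mk_set
      _ = 2 ^ Cardinal.aleph0 := by rw [Cardinal.mk_eq_aleph0]
      _ = Cardinal.continuum := Cardinal.two_power_aleph0
  · refine le_csInf ⟨_, hmem⟩ ?_
    rintro c ⟨𝒜, h𝒜, rfl, hcov⟩
    by_contra hlt
    rw [not_le] at hlt
    -- choose, for each x, a set in 𝒜 capturing graphI x
    have hch : ∀ x : ℕ → Bool, ∃ A : ↥𝒜, graphI x \ ↑A ∈ finTimesEmpty := by
      intro x
      obtain ⟨A, hA𝒜, hA⟩ := hcov (graphI x) (graphI_mem x)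
      exact ⟨⟨A, hA𝒜⟩, hA⟩
    choose g hg using hch
    have hfib : ∀ b : ↥𝒜, Cardinal.mk ↑(g ⁻¹' {b}) ≤ Cardinal.aleph0 := by
      intro b
      have : g ⁻¹' {b} ⊆ {x | graphI x \ ↑b ∈ finTimesEmpty} := by
        intro x hx
        have hxb : g x = b := hx
        have := hg x
        rw [hxb] at this
        exact this
      have hco : (g ⁻¹' {b}).Countable :=
        (captured_countable (h𝒜 b.2)).mono this
      exact Cardinal.mk_le_aleph0_iff.mpr hco.to_subtype
    have key : Cardinal.continuum ≤ Cardinal.mk ↥𝒜 * Cardinal.aleph0 := by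
      calc Cardinal.continuum = Cardinal.mk (ℕ → Bool) := by
            rw [Cardinal.mk_arrow]
            simp [Cardinal.two_power_aleph0]
        _ = Cardinal.mk ((b : ↥𝒜) × ↑(g ⁻¹' {b})) := by
            refine (Cardinal.mk_congr ?_).symm
            refine (Equiv.sigmaCongrRight fun b => ?_).trans (Equiv.sigmaFiberEquiv g)
            exact Equiv.setCongr rfl
        _ = Cardinal.sum (fun b : ↥𝒜 => Cardinal.mk ↑(g ⁻¹' {b})) := Cardinal.mk_sigma _
        _ ≤ Cardinal.sum (fun _ : ↥𝒜 => Cardinal.aleph0) := Cardinal.sum_le_sum _ _ hfib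
        _ = Cardinal.mk ↥𝒜 * Cardinal.aleph0 := Cardinal.sum_const' _ _
    have : Cardinal.mk ↥𝒜 * Cardinal.aleph0 < Cardinal.continuum :=
      Cardinal.mul_lt_of_lt Cardinal.aleph0_le_continuum hlt Cardinal.aleph0_lt_continuum
    exact absurd key (not_le.mpr this)
end

section
/- For every dense G_δ set G ⊆ [0,1] there exists a nowhere dense closed set K ⊆ [0,1] such that K∩G is dense in K and K is N-perfect, i.e., every open set U with U∩K ≠ ∅ satisfies μ(U∩K) > 0 (μ Lebesgue measure). -/
open Cardinal Set MeasureTheory Filter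

namespace Stmt17Aux

noncomputable section

variable (V : ℕ → Set ℝ)

/-- Finite intersections of the `V n`. -/
def W : ℕ → Set ℝ
  | 0 => V 0
  | (t+1) => W t ∩ V (t+1)

lemma W_subset {n t : ℕ} (h : n ≤ t) : W V t ⊆ V n := by
  induction t with
  | zero => simpa [W] using (by omega : n = 0) ▸ subset_rfl
  | succ t ih =>
    rcases Nat.lt_or_ge n (t+1) with h' | h'
    · exact (inter_subset_left).trans (ih (by omega))
    · have : n = t + 1 := by omega
      subst this; exact inter_subset_right

lemma W_open (hVo : ∀ n, IsOpen (V n)) (t : ℕ) : IsOpen (W V t) := by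
  induction t with
  | zero => exact hVo 0
  | succ t ih => exact ih.inter (hVo (t+1))

lemma W_dense (hVo : ∀ n, IsOpen (V n)) (hVd : ∀ n, Dense (V n)) (t : ℕ) :
    Dense (W V t) := by
  induction t with
  | zero => exact hVd 0
  | succ t ih => exact Dense.inter_of_isOpen_left ih (hVd (t+1)) (W_open V hVo t)

/-- half-length of outer children -/
def al (t : ℕ) (a b : ℝ) : ℝ := (1 - (2⁻¹:ℝ)^(t+2)) * (b - a) / 2

lemma q_pos (t : ℕ) : (0:ℝ) < (2⁻¹:ℝ)^(t+2) := by positivity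

lemma q_lt_one (t : ℕ) : ((2⁻¹:ℝ))^(t+2) < 1 := by
  apply pow_lt_one₀ (by norm_num) (by norm_num) (by omega)

lemma al_pos {t : ℕ} {a b : ℝ} (h : a < b) : 0 < al t a b := by
  have h1 := q_lt_one t
  unfold al; nlinarith

lemma al_lt {t : ℕ} {a b : ℝ} (h : a < b) : a + al t a b < b - al t a b := by
  have h1 := q_pos t
  have h2 := q_lt_one t
  unfold al; nlinarith

/-- the specification of the middle child -/
def MidSpec (t : ℕ) (a b : ℝ) (p : ℝ × ℝ) : Prop :=
  p.1 < p.2 ∧ Icc p.1 p.2 ⊆ W V t ∧ a + al t a b < p.1 ∧ p.2 < b - al t a b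

lemma exists_mid (hVo : ∀ n, IsOpen (V n)) (hVd : ∀ n, Dense (V n)) (t : ℕ)
    {a b : ℝ} (h : a < b) : ∃ p : ℝ × ℝ, MidSpec V t a b p := by
  have hgap : (Ioo (a + al t a b) (b - al t a b)).Nonempty := nonempty_Ioo.2 (al_lt h)
  have hopen : IsOpen (W V t ∩ Ioo (a + al t a b) (b - al t a b)) :=
    (W_open V hVo t).inter isOpen_Ioo
  obtain ⟨x, hx⟩ := (W_dense V hVo hVd t).inter_open_nonempty _ isOpen_Ioo hgap
  have hx' : x ∈ W V t ∩ Ioo (a + al t a b) (b - al t a b) := ⟨hx.2, hx.1⟩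
  obtain ⟨ε, hε, hball⟩ := Metric.isOpen_iff.1 hopen x hx'
  refine ⟨(x - ε/2, x + ε/2), ?_, ?_, ?_, ?_⟩
  · simp only; linarith
  · intro y hy
    have : y ∈ Metric.ball x ε := by
      simp only [Metric.mem_ball, Real.dist_eq]
      rcases hy with ⟨h1, h2⟩
      rw [abs_lt]; constructor <;> simp only at h1 h2 <;> linarith
    exact (hball this).1
  · have : x - (3*ε/4) ∈ Metric.ball x ε := by
      simp only [Metric.mem_ball, Real.dist_eq]
      rw [abs_lt]; constructor <;> linarith
    have := (hball this).2.1
    simp only; linarith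
  · have : x + (3*ε/4) ∈ Metric.ball x ε := by
      simp only [Metric.mem_ball, Real.dist_eq]
      rw [abs_lt]; constructor <;> linarith
    have := (hball this).2.2
    simp only; linarith

open Classical in
/-- middle child, defined by choice (junk value if the spec is unachievable). -/
def midI (t : ℕ) (a b : ℝ) : ℝ × ℝ :=
  if h : ∃ p : ℝ × ℝ, MidSpec V t a b p then h.choose else (a, b)

open Classical in
lemma midI_spec {t : ℕ} {a b : ℝ} (h : ∃ p : ℝ × ℝ, MidSpec V t a b p) :
    MidSpec V t a b (midI V t a b) := by
  rw [midI, dif_pos h]; exact h.choose_spec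

/-- the three children of an interval -/
def ch (t : ℕ) (a b : ℝ) : Fin 3 → ℝ × ℝ :=
  ![(a, a + al t a b), midI V t a b, (b - al t a b, b)]

lemma ch0 {t : ℕ} {a b : ℝ} : ch V t a b 0 = (a, a + al t a b) := rfl
lemma ch1 {t : ℕ} {a b : ℝ} : ch V t a b 1 = midI V t a b := rfl
lemma ch2 {t : ℕ} {a b : ℝ} : ch V t a b 2 = (b - al t a b, b) := rfl

/-- the nodes of the ternary tree: `nI (i :: s)` is child `i` of node `s`. -/
def nI : List (Fin 3) → ℝ × ℝ
  | [] => (0, 1)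
  | (i :: s) => ch V s.length (nI s).1 (nI s).2 i

/-- the closed interval of a node -/
def J (s : List (Fin 3)) : Set ℝ := Icc (nI V s).1 (nI V s).2

section WithDense

variable (hVo : ∀ n, IsOpen (V n)) (hVd : ∀ n, Dense (V n))
include hVo hVd

lemma ch_lt {t : ℕ} {a b : ℝ} (h : a < b) (i : Fin 3) :
    (ch V t a b i).1 < (ch V t a b i).2 := by
  have hm := midI_spec V (exists_mid V hVo hVd t h)
  have h1 := al_pos (t := t) h
  have h2 := al_lt (t := t) h
  fin_cases i
  · show a < a + al t a b; linarith
  · exact hm.1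
  · show b - al t a b < b; linarith

lemma ch_sub {t : ℕ} {a b : ℝ} (h : a < b) (i : Fin 3) :
    Icc (ch V t a b i).1 (ch V t a b i).2 ⊆ Icc a b := by
  have hm := midI_spec V (exists_mid V hVo hVd t h)
  obtain ⟨hm1, _, hm3, hm4⟩ := hm
  have h1 := al_pos (t := t) h
  have h2 := al_lt (t := t) h
  fin_cases i
  · show Icc a (a + al t a b) ⊆ Icc a b
    exact Icc_subset_Icc le_rfl (by linarith)
  · show Icc (midI V t a b).1 (midI V t a b).2 ⊆ Icc a b
    exact Icc_subset_Icc (by linarith) (by linarith)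
  · show Icc (b - al t a b) b ⊆ Icc a b
    exact Icc_subset_Icc (by linarith) le_rfl

lemma ch_len {t : ℕ} {a b : ℝ} (h : a < b) (i : Fin 3) :
    (ch V t a b i).2 - (ch V t a b i).1 ≤ (b - a) / 2 := by
  have hm := midI_spec V (exists_mid V hVo hVd t h)
  obtain ⟨hm1, _, hm3, hm4⟩ := hm
  have h1 := al_pos (t := t) h
  have h2 := al_lt (t := t) h
  have h3 := q_pos t
  have h4 := q_lt_one t
  have h5 : ((2⁻¹:ℝ))^(t+2) ≤ 2⁻¹ := by
    calc ((2⁻¹:ℝ))^(t+2) ≤ (2⁻¹:ℝ)^1 :=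
          pow_le_pow_of_le_one (by norm_num) (by norm_num) (by omega)
      _ = 2⁻¹ := pow_one _
  fin_cases i
  · show a + al t a b - a ≤ (b - a) / 2
    unfold al at *; nlinarith
  · show (midI V t a b).2 - (midI V t a b).1 ≤ (b - a) / 2
    unfold al at *; nlinarith
  · show b - (b - al t a b) ≤ (b - a) / 2
    unfold al at *; nlinarith

lemma ch_disj {t : ℕ} {a b : ℝ} (h : a < b) {i j : Fin 3} (hij : i ≠ j) :
    Disjoint (Icc (ch V t a b i).1 (ch V t a b i).2)
      (Icc (ch V t a b j).1 (ch V t a b j).2) := by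
  have hm := midI_spec V (exists_mid V hVo hVd t h)
  obtain ⟨hm1, _, hm3, hm4⟩ := hm
  have h1 := al_pos (t := t) h
  have h2 := al_lt (t := t) h
  rw [Set.disjoint_left]
  intro x hxi hxj
  set m := midI V t a b with hmm
  fin_cases i <;> fin_cases j
  · exact absurd rfl hij
  · have p1 : x ∈ Icc a (a + al t a b) := hxi
    have p2 : x ∈ Icc m.1 m.2 := hxj
    rw [mem_Icc] at p1 p2; linarith
  · have p1 : x ∈ Icc a (a + al t a b) := hxi
    have p2 : x ∈ Icc (b - al t a b) b := hxj
    rw [mem_Icc] at p1 p2; linarith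
  · have p1 : x ∈ Icc m.1 m.2 := hxi
    have p2 : x ∈ Icc a (a + al t a b) := hxj
    rw [mem_Icc] at p1 p2; linarith
  · exact absurd rfl hij
  · have p1 : x ∈ Icc m.1 m.2 := hxi
    have p2 : x ∈ Icc (b - al t a b) b := hxj
    rw [mem_Icc] at p1 p2; linarith
  · have p1 : x ∈ Icc (b - al t a b) b := hxi
    have p2 : x ∈ Icc a (a + al t a b) := hxj
    rw [mem_Icc] at p1 p2; linarith
  · have p1 : x ∈ Icc (b - al t a b) b := hxi
    have p2 : x ∈ Icc m.1 m.2 := hxj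
    rw [mem_Icc] at p1 p2; linarith
  · exact absurd rfl hij

lemma nI_lt : ∀ s : List (Fin 3), (nI V s).1 < (nI V s).2
  | [] => by norm_num [nI]
  | (i :: s) => ch_lt V hVo hVd (nI_lt s) i

lemma J_child_sub (i : Fin 3) (s : List (Fin 3)) : J V (i :: s) ⊆ J V s :=
  ch_sub V hVo hVd (nI_lt V hVo hVd s) i

lemma J_desc_sub : ∀ (w s : List (Fin 3)), J V (w ++ s) ⊆ J V s
  | [], s => subset_rfl
  | (i :: w), s => (J_child_sub V hVo hVd i (w ++ s)).trans (J_desc_sub w s)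

lemma J_sub_unit (s : List (Fin 3)) : J V s ⊆ Icc 0 1 := by
  have := J_desc_sub V hVo hVd s []
  rwa [List.append_nil] at this

lemma nI_len : ∀ s : List (Fin 3), (nI V s).2 - (nI V s).1 ≤ (2⁻¹:ℝ) ^ s.length
  | [] => by norm_num [nI]
  | (i :: s) => by
    have h1 : (nI V (i :: s)).2 - (nI V (i :: s)).1 ≤ ((nI V s).2 - (nI V s).1) / 2 :=
      ch_len V hVo hVd (nI_lt V hVo hVd s) i
    have h2 := nI_len s
    calc (nI V (i :: s)).2 - (nI V (i :: s)).1 ≤ ((nI V s).2 - (nI V s).1) / 2 := h1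
      _ ≤ (2⁻¹:ℝ) ^ s.length / 2 := by linarith
      _ = (2⁻¹:ℝ) ^ (i :: s).length := by
          rw [List.length_cons, pow_succ]; ring

lemma J_disj : ∀ (s s' : List (Fin 3)), s.length = s'.length → s ≠ s' →
    Disjoint (J V s) (J V s')
  | [], [], _, hne => absurd rfl hne
  | [], (j :: s'), hlen, _ => by simp at hlen
  | (i :: s), [], hlen, _ => by simp at hlen
  | (i :: s), (j :: s'), hlen, hne => by
    have hlen' : s.length = s'.length := by simpa using hlen
    by_cases hss : s = s'
    · subst hss
      have hij : i ≠ j := fun h => hne (by rw [h])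
      exact ch_disj V hVo hVd (nI_lt V hVo hVd s) hij
    · exact Disjoint.mono (J_child_sub V hVo hVd i s) (J_child_sub V hVo hVd j s')
        (J_disj s s' hlen' hss)

end WithDense

/-- depth-`u` descendants of node `s` -/
def E (u : ℕ) (s : List (Fin 3)) : Set ℝ :=
  ⋃ w ∈ {w : List (Fin 3) | w.length = u}, J V (w ++ s)

lemma E_zero (s : List (Fin 3)) : E V 0 s = J V s := by
  ext x
  simp [E, List.length_eq_zero_iff]

lemma E_closed (u : ℕ) (s : List (Fin 3)) : IsClosed (E V u s) :=
  Set.Finite.isClosed_biUnion (List.finite_length_eq (Fin 3) u) (fun _ _ => isClosed_Icc)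

lemma E_succ (u : ℕ) (s : List (Fin 3)) (i : Fin 3) : E V u (i :: s) ⊆ E V (u+1) s := by
  intro x hx
  simp only [E, mem_iUnion, mem_setOf_eq] at hx ⊢
  obtain ⟨w, hw, hx⟩ := hx
  refine ⟨w ++ [i], by simp [hw], ?_⟩
  rw [List.append_assoc]
  exact hx

section WithDense2

variable (hVo : ∀ n, IsOpen (V n)) (hVd : ∀ n, Dense (V n))
include hVo hVd

lemma E_sub_J (u : ℕ) (s : List (Fin 3)) : E V u s ⊆ J V s := by
  intro x hx
  simp only [E, mem_iUnion, mem_setOf_eq] at hx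
  obtain ⟨w, _, hx⟩ := hx
  exact J_desc_sub V hVo hVd w s hx

lemma E_anti (u : ℕ) (s : List (Fin 3)) : E V (u+1) s ⊆ E V u s := by
  intro x hx
  simp only [E, mem_iUnion, mem_setOf_eq] at hx ⊢
  obtain ⟨w, hw, hx⟩ := hx
  cases w with
  | nil => simp at hw
  | cons i w' =>
    refine ⟨w', by simpa using hw, ?_⟩
    have : x ∈ J V (i :: (w' ++ s)) := hx
    exact J_child_sub V hVo hVd i (w' ++ s) this

lemma E_antitone (s : List (Fin 3)) : Antitone (fun u => E V u s) :=
  antitone_nat_of_succ_le (fun u => E_anti V hVo hVd u s)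

end WithDense2

/-- the measure lower bound factor -/
def P (t u : ℕ) : ℝ := 1 - (2⁻¹:ℝ)^(t+1) + (2⁻¹:ℝ)^(t+1+u)

lemma P_half (t u : ℕ) : (1:ℝ)/2 ≤ P t u := by
  have h1 : ((2⁻¹:ℝ))^(t+1) ≤ (2⁻¹:ℝ)^1 :=
    pow_le_pow_of_le_one (by norm_num) (by norm_num) (by omega)
  have h2 : (0:ℝ) < (2⁻¹:ℝ)^(t+1+u) := by positivity
  simp only [pow_one] at h1
  unfold P; linarith

lemma P_nonneg (t u : ℕ) : (0:ℝ) ≤ P t u := by linarith [P_half t u]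

section WithDense3

variable (hVo : ∀ n, IsOpen (V n)) (hVd : ∀ n, Dense (V n))
include hVo hVd

lemma E_vol : ∀ (u : ℕ) (s : List (Fin 3)),
    ENNReal.ofReal (((nI V s).2 - (nI V s).1) * P s.length u) ≤ volume (E V u s) := by
  intro u
  induction u with
  | zero =>
    intro s
    rw [E_zero]
    unfold J
    rw [Real.volume_Icc]
    apply ENNReal.ofReal_le_ofReal
    have : P s.length 0 = 1 := by unfold P; ring
    rw [this, mul_one]
  | succ u ih =>
    intro s
    set t := s.length with ht
    set a := (nI V s).1
    set b := (nI V s).2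
    have hab : a < b := nI_lt V hVo hVd s
    set L := al t a b with hL
    have e0 : nI V ((0 : Fin 3) :: s) = (a, a + L) := rfl
    have e2 : nI V ((2 : Fin 3) :: s) = (b - L, b) := rfl
    have hlen0 : ((0 : Fin 3) :: s).length = t + 1 := by simp [ht]
    have hlen2 : ((2 : Fin 3) :: s).length = t + 1 := by simp [ht]
    have ih0 := ih ((0 : Fin 3) :: s)
    have ih2 := ih ((2 : Fin 3) :: s)
    rw [e0, hlen0] at ih0
    rw [e2, hlen2] at ih2
    simp only [add_sub_cancel_left] at ih0
    have h2' : b - (b - L) = L := by ring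
    rw [h2'] at ih2
    have hne : ((0:Fin 3) :: s) ≠ ((2:Fin 3) :: s) := by simp
    have hdisj : Disjoint (E V u ((0:Fin 3) :: s)) (E V u ((2:Fin 3) :: s)) :=
      Disjoint.mono (E_sub_J V hVo hVd u _) (E_sub_J V hVo hVd u _)
        (J_disj V hVo hVd _ _ (by simp) hne)
    have hsub : E V u ((0:Fin 3) :: s) ∪ E V u ((2:Fin 3) :: s) ⊆ E V (u+1) s :=
      union_subset (E_succ V u s 0) (E_succ V u s 2)
    have hunion : volume (E V u ((0:Fin 3) :: s)) + volume (E V u ((2:Fin 3) :: s))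
        ≤ volume (E V (u+1) s) := by
      rw [← measure_union hdisj (E_closed V u _).measurableSet]
      exact measure_mono hsub
    have hLpos : 0 < L := al_pos hab
    have key : (b - a) * P t (u+1) ≤ L * P (t+1) u + L * P (t+1) u := by
      have hq : (0:ℝ) < (2⁻¹:ℝ)^(t+2) := q_pos t
      have hh0 : (0:ℝ) < (2⁻¹:ℝ)^u := by positivity
      have hh1 : ((2⁻¹:ℝ))^u ≤ 1 := pow_le_one₀ (by norm_num) (by norm_num)
      have hp1 : ((2⁻¹:ℝ))^(t+1) = 2 * (2⁻¹:ℝ)^(t+2) := by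
        rw [pow_succ]; ring
      have hp2 : ((2⁻¹:ℝ))^(t+1+(u+1)) = (2⁻¹:ℝ)^(t+2) * (2⁻¹:ℝ)^u := by
        rw [show t+1+(u+1) = (t+2)+u by omega, pow_add]
      have hp3 : ((2⁻¹:ℝ))^(t+1+1) = (2⁻¹:ℝ)^(t+2) := by norm_num
      have hp4 : ((2⁻¹:ℝ))^(t+1+1+u) = (2⁻¹:ℝ)^(t+2) * (2⁻¹:ℝ)^u := by
        rw [show t+1+1+u = (t+2)+u by omega, pow_add]
      unfold P
      rw [hp1, hp2, hp3, hp4]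
      rw [hL]
      unfold al
      nlinarith [hab, hq, hh0, hh1,
        mul_nonneg (mul_nonneg (sub_nonneg.2 hab.le)
          (mul_pos hq hq).le) (sub_nonneg.2 hh1)]
    calc ENNReal.ofReal ((b - a) * P t (u+1))
        ≤ ENNReal.ofReal (L * P (t+1) u + L * P (t+1) u) := ENNReal.ofReal_le_ofReal key
      _ = ENNReal.ofReal (L * P (t+1) u) + ENNReal.ofReal (L * P (t+1) u) := by
          rw [ENNReal.ofReal_add] <;>
            exact mul_nonneg (le_of_lt hLpos) (P_nonneg _ _)
      _ ≤ volume (E V u ((0:Fin 3) :: s)) + volume (E V u ((2:Fin 3) :: s)) :=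
          add_le_add ih0 ih2
      _ ≤ volume (E V (u+1) s) := hunion

end WithDense3


/-- the limit set below node `s` -/
def D (s : List (Fin 3)) : Set ℝ := ⋂ u, E V u s

/-- the fat Cantor-type set -/
def C : Set ℝ := D V []

lemma C_closed : IsClosed (C V) :=
  isClosed_iInter (fun u => E_closed V u [])

section Main

variable (hVo : ∀ n, IsOpen (V n)) (hVd : ∀ n, Dense (V n))
include hVo hVd

lemma D_vol (s : List (Fin 3)) :
    ENNReal.ofReal (((nI V s).2 - (nI V s).1) / 2) ≤ volume (D V s) := by
  have hmeas : ∀ u : ℕ, NullMeasurableSet (E V u s) volume :=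
    fun u => (E_closed V u s).measurableSet.nullMeasurableSet
  have hanti := E_antitone V hVo hVd s
  have hfin : ∃ u : ℕ, volume (E V u s) ≠ ⊤ := by
    refine ⟨0, ?_⟩
    rw [E_zero]
    unfold J
    rw [Real.volume_Icc]
    exact ENNReal.ofReal_ne_top
  have ht := tendsto_measure_iInter_atTop hmeas hanti hfin
  refine ge_of_tendsto ht (Filter.Eventually.of_forall fun u => ?_)
  have hab : (nI V s).1 < (nI V s).2 := nI_lt V hVo hVd s
  calc ENNReal.ofReal (((nI V s).2 - (nI V s).1) / 2)
      ≤ ENNReal.ofReal (((nI V s).2 - (nI V s).1) * P s.length u) := by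
        apply ENNReal.ofReal_le_ofReal
        nlinarith [P_half s.length u]
    _ ≤ volume (E V u s) := E_vol V hVo hVd u s

lemma D_pos (s : List (Fin 3)) : 0 < volume (D V s) := by
  refine lt_of_lt_of_le ?_ (D_vol V hVo hVd s)
  have hab : (nI V s).1 < (nI V s).2 := nI_lt V hVo hVd s
  apply ENNReal.ofReal_pos.2
  linarith

lemma D_nonempty (s : List (Fin 3)) : (D V s).Nonempty :=
  nonempty_of_measure_ne_zero (ne_of_gt (D_pos V hVo hVd s))

omit hVo hVd in
lemma D_sub_J (s : List (Fin 3)) : D V s ⊆ J V s := by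
  intro x hx
  have : x ∈ E V 0 s := mem_iInter.1 hx 0
  rwa [E_zero] at this

omit hVo hVd in
lemma E_shift (u : ℕ) (s : List (Fin 3)) : E V u s ⊆ E V (u + s.length) [] := by
  intro x hx
  simp only [E, mem_iUnion, mem_setOf_eq] at hx ⊢
  obtain ⟨w, hw, hx⟩ := hx
  refine ⟨w ++ s, by simp [hw], ?_⟩
  rw [List.append_nil]
  exact hx

lemma D_sub_C (s : List (Fin 3)) : D V s ⊆ C V := by
  intro x hx
  refine mem_iInter.2 fun t => ?_
  have h1 : x ∈ E V t s := mem_iInter.1 hx t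
  have h2 : x ∈ E V (t + s.length) [] := E_shift V t s h1
  exact E_antitone V hVo hVd [] (Nat.le_add_right t s.length) h2

omit hVo hVd in
lemma C_sub_unit : C V ⊆ Icc 0 1 := by
  intro x hx
  have : x ∈ E V 0 [] := mem_iInter.1 hx 0
  rw [E_zero] at this
  exact this

omit hVo hVd in
lemma mem_node {x : ℝ} (hx : x ∈ C V) (t : ℕ) :
    ∃ s : List (Fin 3), s.length = t ∧ x ∈ J V s := by
  have : x ∈ E V t [] := mem_iInter.1 hx t
  simp only [E, mem_iUnion, mem_setOf_eq] at this
  obtain ⟨w, hw, hx'⟩ := this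
  exact ⟨w, hw, by rwa [List.append_nil] at hx'⟩

lemma C_nonempty : (C V).Nonempty :=
  (D_nonempty V hVo hVd []).mono (D_sub_C V hVo hVd [])

lemma node_small {x : ℝ} (hx : x ∈ C V) {ε : ℝ} (hε : 0 < ε) (n : ℕ) :
    ∃ s : List (Fin 3), n ≤ s.length ∧ x ∈ J V s ∧ ∀ y ∈ J V s, |y - x| < ε := by
  obtain ⟨t₀, ht₀⟩ := exists_pow_lt_of_lt_one hε (by norm_num : (2⁻¹:ℝ) < 1)
  obtain ⟨s, hslen, hsx⟩ := mem_node V hx (max n t₀)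
  refine ⟨s, by omega, hsx, fun y hy => ?_⟩
  have hlen : (nI V s).2 - (nI V s).1 ≤ (2⁻¹:ℝ) ^ s.length := nI_len V hVo hVd s
  have hmono : ((2⁻¹:ℝ)) ^ s.length ≤ (2⁻¹:ℝ) ^ t₀ :=
    pow_le_pow_of_le_one (by norm_num) (by norm_num) (by omega)
  simp only [J, mem_Icc] at hy hsx
  rw [abs_sub_lt_iff]
  constructor <;> linarith

lemma C_portion_pos (O : Set ℝ) (hO : IsOpen O) (hne : (O ∩ C V).Nonempty) :
    0 < volume (O ∩ C V) := by
  obtain ⟨x, hxO, hxC⟩ := hne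
  obtain ⟨ε, hε, hball⟩ := Metric.isOpen_iff.1 hO x hxO
  obtain ⟨s, _, _, hsmall⟩ := node_small V hVo hVd hxC hε 0
  have hsub : D V s ⊆ O ∩ C V := by
    intro z hz
    refine ⟨hball ?_, D_sub_C V hVo hVd s hz⟩
    rw [Metric.mem_ball, Real.dist_eq]
    exact hsmall z (D_sub_J V s hz)
  exact lt_of_lt_of_le (D_pos V hVo hVd s) (measure_mono hsub)

lemma C_gap {x : ℝ} (hx : x ∈ C V) {ε : ℝ} (hε : 0 < ε) :
    ∃ y ∈ Icc (0:ℝ) 1, |y - x| < ε ∧ y ∉ C V := by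
  obtain ⟨s, _, hsx, hsmall⟩ := node_small V hVo hVd hx hε 0
  have hab : (nI V s).1 < (nI V s).2 := nI_lt V hVo hVd s
  obtain ⟨hm1, hm2, hm3, hm4⟩ := midI_spec V (exists_mid V hVo hVd s.length hab)
  have hL := al_pos (t := s.length) hab
  have hL2 := al_lt (t := s.length) hab
  set a := (nI V s).1
  set b := (nI V s).2
  set t := s.length
  set g := (a + al t a b + (midI V t a b).1) / 2 with hg
  have hg1 : a + al t a b < g := by rw [hg]; linarith
  have hg2 : g < (midI V t a b).1 := by rw [hg]; linarith
  have hgJ : g ∈ J V s := by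
    rw [J, mem_Icc]
    constructor <;> linarith
  refine ⟨g, J_sub_unit V hVo hVd s hgJ, hsmall g hgJ, ?_⟩
  intro hgC
  obtain ⟨s', hs'len, hgJ'⟩ := mem_node V hgC (t + 1)
  cases s' with
  | nil => simp [t] at hs'len
  | cons i r =>
    have hrlen : r.length = s.length := by simpa [t] using hs'len
    have hrs : r = s := by
      by_contra hne
      have hdisj := J_disj V hVo hVd r s hrlen hne
      have hgr : g ∈ J V r := J_child_sub V hVo hVd i r hgJ'
      exact Set.disjoint_left.1 hdisj hgr hgJ
    subst hrs
    fin_cases i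
    · have : g ∈ Icc a (a + al t a b) := hgJ'
      rw [mem_Icc] at this
      linarith
    · have : g ∈ Icc (midI V t a b).1 (midI V t a b).2 := hgJ'
      rw [mem_Icc] at this
      linarith
    · have : g ∈ Icc (b - al t a b) b := hgJ'
      rw [mem_Icc] at this
      linarith

lemma C_dense_V (n : ℕ) {x : ℝ} (hx : x ∈ C V) {ε : ℝ} (hε : 0 < ε) :
    ∃ y, y ∈ C V ∧ y ∈ V n ∧ |y - x| < ε := by
  obtain ⟨s, hsn, hsx, hsmall⟩ := node_small V hVo hVd hx hε n
  have hab : (nI V s).1 < (nI V s).2 := nI_lt V hVo hVd s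
  obtain ⟨hm1, hm2, hm3, hm4⟩ := midI_spec V (exists_mid V hVo hVd s.length hab)
  obtain ⟨y, hy⟩ := D_nonempty V hVo hVd ((1 : Fin 3) :: s)
  have hyJ : y ∈ J V ((1 : Fin 3) :: s) := D_sub_J V _ hy
  have hyW : y ∈ W V s.length := by
    have : y ∈ Icc (midI V s.length (nI V s).1 (nI V s).2).1
        (midI V s.length (nI V s).1 (nI V s).2).2 := hyJ
    exact hm2 this
  refine ⟨y, D_sub_C V hVo hVd _ hy, W_subset V hsn hyW, ?_⟩
  exact hsmall y (J_child_sub V hVo hVd 1 s hyJ)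

end Main

end
end Stmt17Aux

open Stmt17Aux in
/-- For every dense Gδ set `G ⊆ [0,1]` there is a nonempty nowhere dense closed
`K ⊆ [0,1]` such that `K ∩ G` is dense in `K` and `K` is 𝒩-perfect. -/
theorem stmt17 (G : Set (Set.Icc (0:ℝ) 1)) (hGδ : IsGδ G) (hGdense : Dense G) :
    ∃ K : Set (Set.Icc (0:ℝ) 1), K.Nonempty ∧ IsClosed K ∧ IsNowhereDense K ∧
      K ⊆ closure (K ∩ G) ∧
      ∀ U : Set (Set.Icc (0:ℝ) 1), IsOpen U → (U ∩ K).Nonempty → 0 < volume (U ∩ K) := by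
  obtain ⟨f, hfo, hfeq⟩ := hGδ.eq_iInter_nat
  have hfd : ∀ n, Dense (f n) := fun n => hGdense.mono (hfeq ▸ iInter_subset f n)
  choose O hOo hOp using fun n => isOpen_induced_iff.1 (hfo n)
  set V : ℕ → Set ℝ := fun n => O n ∪ (Icc (0:ℝ) 1)ᶜ with hV
  have hVo : ∀ n, IsOpen (V n) := fun n => (hOo n).union isClosed_Icc.isOpen_compl
  have hVd : ∀ n, Dense (V n) := by
    intro n
    rw [Metric.dense_iff]
    intro x r hr
    by_cases hx : x ∈ Icc (0:ℝ) 1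
    · obtain ⟨z, hz1, hz2⟩ := Metric.dense_iff.1 (hfd n) ⟨x, hx⟩ r hr
      refine ⟨z.val, ?_, Or.inl ?_⟩
      · rw [Metric.mem_ball] at hz1 ⊢
        rwa [Subtype.dist_eq] at hz1
      · rw [← hOp n] at hz2
        exact hz2
    · exact ⟨x, Metric.mem_ball_self hr, Or.inr hx⟩
  set Cs : Set ℝ := C V with hCs
  have hCclosed : IsClosed Cs := C_closed V
  have hCsub : Cs ⊆ Icc 0 1 := C_sub_unit V
  refine ⟨Subtype.val ⁻¹' Cs, ?_, ?_, ?_, ?_, ?_⟩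
  · obtain ⟨c, hc⟩ := C_nonempty V hVo hVd
    exact ⟨⟨c, hCsub hc⟩, hc⟩
  · exact hCclosed.preimage continuous_subtype_val
  · have hKcl : IsClosed (Subtype.val ⁻¹' Cs : Set (Set.Icc (0:ℝ) 1)) :=
      hCclosed.preimage continuous_subtype_val
    show interior (closure (Subtype.val ⁻¹' Cs)) = ∅
    rw [hKcl.closure_eq]
    rw [eq_empty_iff_forall_notMem]
    intro x hx
    have hxK : (x : ℝ) ∈ Cs := (interior_subset hx : x ∈ Subtype.val ⁻¹' Cs)
    obtain ⟨ε, hε, hball⟩ := Metric.mem_nhds_iff.1 (mem_interior_iff_mem_nhds.1 hx)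
    obtain ⟨y, hyIcc, hyd, hyC⟩ := C_gap V hVo hVd hxK hε
    have hmem : (⟨y, hyIcc⟩ : Set.Icc (0:ℝ) 1) ∈ Metric.ball x ε := by
      rw [Metric.mem_ball, Subtype.dist_eq, Real.dist_eq]
      exact hyd
    exact hyC (hball hmem)
  · intro x hx
    have hxC : (x : ℝ) ∈ Cs := hx
    rw [closure_subtype]
    haveI : CompleteSpace ↥Cs := hCclosed.completeSpace_coe
    set Dn : ℕ → Set ↥Cs := fun n => (fun z : ↥Cs => z.val) ⁻¹' (V n) with hDn
    have hDo : ∀ n, IsOpen (Dn n) := fun n => (hVo n).preimage continuous_subtype_val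
    have hDd : ∀ n, Dense (Dn n) := by
      intro n
      rw [Metric.dense_iff]
      intro z r hr
      obtain ⟨y, hyC, hyV, hyd⟩ := C_dense_V V hVo hVd n z.2 hr
      refine ⟨⟨y, hyC⟩, ?_, hyV⟩
      rw [Metric.mem_ball, Subtype.dist_eq, Real.dist_eq]
      exact hyd
    have hdense := dense_iInter_of_isOpen hDo hDd
    have hx' : (⟨(x : ℝ), hxC⟩ : ↥Cs) ∈ closure (⋂ n, Dn n) := hdense _
    rw [closure_subtype] at hx'
    refine closure_mono ?_ hx'
    rintro z ⟨w, hw, rfl⟩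
    have hwC : (w : ℝ) ∈ Cs := w.2
    have hwIcc : (w : ℝ) ∈ Icc (0:ℝ) 1 := hCsub hwC
    have hwV : ∀ n, (w : ℝ) ∈ V n := fun n => mem_iInter.1 hw n
    have hwO : ∀ n, (w : ℝ) ∈ O n := by
      intro n
      rcases hwV n with h | h
      · exact h
      · exact absurd hwIcc h
    refine ⟨⟨(w : ℝ), hwIcc⟩, ⟨hwC, ?_⟩, rfl⟩
    rw [hfeq]
    refine mem_iInter.2 fun n => ?_
    have : (⟨(w : ℝ), hwIcc⟩ : Set.Icc (0:ℝ) 1) ∈ Subtype.val ⁻¹' (O n) := hwO n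
    rw [hOp n] at this
    exact this
  · intro U hU hne
    obtain ⟨O', hO'o, hO'p⟩ := isOpen_induced_iff.1 hU
    have hvol : volume (U ∩ Subtype.val ⁻¹' Cs) =
        volume (Subtype.val '' (U ∩ Subtype.val ⁻¹' Cs)) :=
      (MeasurableEmbedding.subtype_coe measurableSet_Icc).comap_apply _ _
    have him : Subtype.val '' (U ∩ Subtype.val ⁻¹' Cs) = O' ∩ Cs := by
      ext z
      constructor
      · rintro ⟨w, ⟨hwU, hwK⟩, rfl⟩
        rw [← hO'p] at hwU
        exact ⟨hwU, hwK⟩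
      · rintro ⟨hzO, hzC⟩
        refine ⟨⟨z, hCsub hzC⟩, ⟨?_, hzC⟩, rfl⟩
        rw [← hO'p]
        exact hzO
    rw [hvol, him]
    obtain ⟨w, hwU, hwK⟩ := hne
    exact C_portion_pos V hVo hVd O' hO'o
      ⟨(w : ℝ), by rw [← hO'p] at hwU; exact hwU, hwK⟩
end

section
/- There is a Tukey morphism from (ω^ω, ≤*) to (nwd, ⊆^N): there exist maps Ψ₋ : ω^ω → nwd and Ψ₊ : nwd → ω^ω such that whenever Ψ₋(f) \ A has Lebesgue measure zero, then f(n) ≤ Ψ₊(A)(n) for all n. Consequently, cof_N(nwd) ≥ 𝔡. -/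
open Cardinal Set MeasureTheory Filter

/-- The dominating number 𝔡. -/
noncomputable def dominatingNumber : Cardinal :=
  sInf {c | ∃ D : Set (ℕ → ℕ), Cardinal.mk D = c ∧
    ∀ f : ℕ → ℕ, ∃ g ∈ D, ∀ᶠ n in atTop, f n ≤ g n}

/-!
Split a dense open part of `[0,1]` into disjoint open intervals `Jₙ`, and take decreasing
dense open sets `Uₖ` with null intersection (they exist because the Liouville numbers form a
null dense `G_δ`). Then `Ψ₋ f = ⋃ₙ Jₙ \ U_{f n}` misses the dense open set
`⋃ₙ Jₙ ∩ U_{f n}`, so it is nowhere dense. A nowhere dense `A` cannot be conull in `Jₙ`, and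
`Jₙ ⊆ ⋂ₖ Uₖ ∪ ⋃ₖ Jₙ \ Uₖ`, so some `(Jₙ \ Uₖ) \ A` is not null; let `Ψ₊ A n` be the least
such `k`. If `Ψ₋ f \ A` is null then so is `(Jₙ \ Uₖ) \ A ⊆ Ψ₋ f \ A` for every `k ≤ f n`,
hence `f n < Ψ₊ A n`.
-/

open Function Topology

theorem dominatingNumber_le_relCof {X : Type} {J I : Set (Set X)} (hJ : ∅ ∈ J)
    (Ψm : (ℕ → ℕ) → Set X) (Ψp : Set X → ℕ → ℕ) (hΨm : ∀ f, Ψm f ∈ I)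
    (hΨ : ∀ f, ∀ A ∈ I, Ψm f \ A ∈ J → ∀ᶠ n in atTop, f n ≤ Ψp A n) :
    dominatingNumber ≤ relCof J I := by
  refine le_csInf ⟨_, I, Subset.rfl, rfl, fun A hA => ⟨A, hA, by rwa [sdiff_self]⟩⟩ ?_
  rintro _ ⟨𝒜, h𝒜I, rfl, h𝒜⟩
  rw [dominatingNumber]
  refine le_trans (csInf_le' ⟨Ψp '' 𝒜, rfl, fun f => ?_⟩) mk_image_le
  obtain ⟨A, hA𝒜, hA⟩ := h𝒜 (Ψm f) (hΨm f)
  exact ⟨Ψp A, mem_image_of_mem Ψp hA𝒜, hΨ f A (h𝒜I hA𝒜) hA⟩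

theorem IsOpen.subset_closure_of_measure_diff_eq_zero {X : Type*} [TopologicalSpace X]
    [MeasurableSpace X] {μ : Measure X} [μ.IsOpenPosMeasure] {O A : Set X}
    (hO : IsOpen O) (h : μ (O \ A) = 0) : O ⊆ closure A := by
  have hnull : μ (O \ closure A) = 0 :=
    measure_mono_null (sdiff_subset_sdiff_right subset_closure) h
  exact sdiff_eq_empty.1 ((hO.sdiff isClosed_closure).eq_empty_of_measure_zero hnull)

section Tukey

variable {X : Type*} {J U : ℕ → Set X}

def tukeyNwd (J U : ℕ → Set X) (f : ℕ → ℕ) : Set X := ⋃ n, J n \ U (f n)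

theorem isNowhereDense_tukeyNwd [TopologicalSpace X] (hJo : ∀ n, IsOpen (J n))
    (hJd : Pairwise (Disjoint on J)) (hJ : Dense (⋃ n, J n)) (hUo : ∀ k, IsOpen (U k))
    (hUd : ∀ k, Dense (U k)) (f : ℕ → ℕ) : IsNowhereDense (tukeyNwd J U f) := by
  set V := ⋃ n, J n ∩ U (f n)
  have hVo : IsOpen V := isOpen_iUnion fun n => (hJo n).inter (hUo _)
  have hVd : Dense V := by
    refine (hJ.mono (iUnion_subset fun n => ?_)).of_closure
    exact ((hUd (f n)).open_subset_closure_inter (hJo n)).trans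
      (closure_mono (subset_iUnion_of_subset n Subset.rfl))
  have hsub : tukeyNwd J U f ⊆ Vᶜ := by
    rintro x ⟨_, ⟨n, rfl⟩, hxn, hxU⟩
    simp only [V, compl_iUnion, mem_iInter, mem_compl_iff, mem_inter_iff, not_and]
    intro m hxm
    obtain rfl : m = n := hJd.eq (not_disjoint_iff.2 ⟨x, hxm, hxn⟩)
    exact hxU
  refine IsNowhereDense.mono hsub (isClosed_isNowhereDense_iff_compl.2 ?_).2
  rw [compl_compl]
  exact ⟨hVo, hVd⟩

variable [MeasurableSpace X] {μ : Measure X}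

/-- If no `k` qualifies this is `sInf ∅ = 0`; that only happens when `A` is not nowhere dense. -/
noncomputable def tukeyBound (μ : Measure X) (J U : ℕ → Set X) (A : Set X) (n : ℕ) : ℕ :=
  sInf {k | μ ((J n \ U k) \ A) ≠ 0}

theorem le_tukeyBound (hU : Antitone U) {f : ℕ → ℕ} {A : Set X}
    (hf : μ (tukeyNwd J U f \ A) = 0) {n : ℕ} (hA : ∃ k, μ ((J n \ U k) \ A) ≠ 0) :
    f n ≤ tukeyBound μ J U A n := by
  refine le_csInf hA fun k hk => ?_
  by_contra! hkf
  refine hk (measure_mono_null (sdiff_subset_sdiff_left ?_) hf)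
  exact (sdiff_subset_sdiff_right (hU hkf.le)).trans (subset_iUnion_of_subset n Subset.rfl)

theorem exists_measure_diff_ne_zero [TopologicalSpace X] [μ.IsOpenPosMeasure]
    (hJo : ∀ n, IsOpen (J n)) (hJne : ∀ n, (J n).Nonempty) (hU : μ (⋂ k, U k) = 0)
    {A : Set X} (hA : IsNowhereDense A) (n : ℕ) : ∃ k, μ ((J n \ U k) \ A) ≠ 0 := by
  by_contra! h
  have hJA : μ (J n \ A) = 0 := by
    refine measure_mono_null (fun x hx => ?_) (measure_union_null hU (measure_iUnion_null h))
    by_cases hxU : x ∈ ⋂ k, U k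
    · exact Or.inl hxU
    · obtain ⟨k, hk⟩ := not_forall.1 (mt mem_iInter.2 hxU)
      exact Or.inr (mem_iUnion.2 ⟨k, ⟨hx.1, hk⟩, hx.2⟩)
  have : J n ⊆ interior (closure A) :=
    interior_maximal ((hJo n).subset_closure_of_measure_diff_eq_zero hJA) (hJo n)
  rw [hA] at this
  exact (hJne n).ne_empty (subset_empty_iff.1 this)

end Tukey

theorem exists_antitone_isOpen_dense_measure_iInter_eq_zero {X : Type*} [TopologicalSpace X]
    [BaireSpace X] [MeasurableSpace X] {μ : Measure X} (h : Disjoint (residual X) (ae μ)) :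
    ∃ U : ℕ → Set X, Antitone U ∧ (∀ k, IsOpen (U k)) ∧ (∀ k, Dense (U k)) ∧
      μ (⋂ k, U k) = 0 := by
  obtain ⟨s, hs, t, ht, hst⟩ := Filter.disjoint_iff.1 h
  obtain ⟨G, hGs, hGδ, hGd⟩ := mem_residual.1 hs
  obtain ⟨V, hVo, rfl⟩ := hGδ.eq_iInter_nat
  refine ⟨fun k => ⋂ j ∈ Iic k, V j,
    fun k l hkl => biInter_subset_biInter_left (Iic_subset_Iic.2 hkl),
    fun k => (finite_Iic k).isOpen_biInter fun j _ => hVo j,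
    fun k => hGd.mono (subset_iInter₂ fun j _ => iInter_subset V j), ?_⟩
  refine measure_mono_null ?_ (mem_ae_iff.1 ht)
  exact (iInter_mono fun k => biInter_subset_of_mem self_mem_Iic).trans
    (hGs.trans hst.subset_compl_right)

section Subtype
variable {Y : Type*} [TopologicalSpace Y] {s : Set Y}

theorem dense_preimage_val_of_subset_closure_interior (hs : s ⊆ closure (interior s))
    {S : Set Y} (hS : interior s ⊆ closure S) : Dense ((↑) ⁻¹' S : Set s) := by
  intro x
  rw [IsEmbedding.subtypeVal.closure_eq_preimage_closure_image, mem_preimage,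
    image_preimage_eq_inter_range, Subtype.range_coe]
  have : interior s ⊆ closure (S ∩ s) := fun y hy =>
    closure_mono (show interior s ∩ S ⊆ S ∩ s from fun _ hz => ⟨hz.2, interior_subset hz.1⟩)
      ((isOpen_interior (s := s)).inter_closure (mem_inter hy (hS hy)))
  exact closure_minimal this isClosed_closure (hs x.2)

theorem isOpenPosMeasure_comap_val [MeasurableSpace Y] (μ : Measure Y) [μ.IsOpenPosMeasure]
    (hs_meas : MeasurableSet s) (hs : s ⊆ closure (interior s)) :
    (μ.comap ((↑) : s → Y)).IsOpenPosMeasure := by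
  refine ⟨fun W hW ⟨x, hx⟩ => ?_⟩
  rw [(MeasurableEmbedding.subtype_coe hs_meas).comap_apply]
  obtain ⟨W', hW'o, rfl⟩ := isOpen_induced_iff.1 hW
  have hne : (W' ∩ interior s).Nonempty := mem_closure_iff.1 (hs x.2) W' hW'o hx
  refine (hW'o.inter isOpen_interior).measure_ne_zero μ hne ∘ measure_mono_null ?_
  exact fun y hy => ⟨⟨y, interior_subset hy.2⟩, hy.1, rfl⟩

end Subtype

theorem Icc_zero_one_subset_closure_interior : Icc (0:ℝ) 1 ⊆ closure (interior (Icc 0 1)) := by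
  rw [interior_Icc, closure_Ioo zero_ne_one]

instance : (volume : Measure (Icc (0:ℝ) 1)).IsOpenPosMeasure :=
  isOpenPosMeasure_comap_val volume measurableSet_Icc Icc_zero_one_subset_closure_interior

theorem exists_mem_Icc_inv_succ {x : ℝ} (hx : 0 < x) (hx1 : x ≤ 1) :
    ∃ n : ℕ, x ∈ Icc ((n + 2 : ℝ)⁻¹) ((n + 1 : ℝ)⁻¹) := by
  set n := ⌊x⁻¹ - 1⌋₊
  have h1 : (n:ℝ) ≤ x⁻¹ - 1 := Nat.floor_le (sub_nonneg.2 ((one_le_inv₀ hx).2 hx1))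
  have h2 : x⁻¹ - 1 < n + 1 := Nat.lt_floor_add_one _
  refine ⟨n, ?_, ?_⟩
  · rw [inv_le_comm₀ (by positivity) hx]; linarith
  · rw [le_inv_comm₀ hx (by positivity)]; linarith

theorem exists_pairwise_disjoint_isOpen_dense_iUnion_Icc :
    ∃ J : ℕ → Set (Icc (0:ℝ) 1), (∀ n, IsOpen (J n)) ∧ Pairwise (Disjoint on J) ∧
      (∀ n, (J n).Nonempty) ∧ Dense (⋃ n, J n) := by
  set a : ℕ → ℝ := fun n => ((n:ℝ) + 1)⁻¹
  have ha : StrictAnti a := fun m n hmn => by simp only [a]; gcongr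
  have hIcc : ∀ n, Ioo (a (n + 1)) (a n) ⊆ Icc 0 1 := fun n x hx =>
    ⟨(inv_pos.2 (by positivity)).le.trans hx.1.le,
      hx.2.le.trans (inv_le_one_of_one_le₀ (by simp))⟩
  refine ⟨fun n => (↑) ⁻¹' Ioo (a (n + 1)) (a n),
    fun n => isOpen_Ioo.preimage continuous_subtype_val, fun m n hmn => ?_, fun n => ?_, ?_⟩
  · exact (ha.antitone.pairwise_disjoint_on_Ioo_succ hmn).preimage _
  · obtain ⟨x, hx⟩ := nonempty_Ioo.2 (ha (Nat.lt_succ_self n))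
    exact ⟨⟨x, hIcc n hx⟩, hx⟩
  · rw [← preimage_iUnion]
    refine dense_preimage_val_of_subset_closure_interior Icc_zero_one_subset_closure_interior ?_
    rw [interior_Icc]
    intro x hx
    obtain ⟨n, hn⟩ := exists_mem_Icc_inv_succ hx.1 hx.2.le
    refine closure_mono (subset_iUnion _ n) ?_
    rw [closure_Ioo (ha (Nat.lt_succ_self n)).ne]
    simpa [a, add_assoc, one_add_one_eq_two] using hn

theorem exists_antitone_isOpen_dense_volume_iInter_eq_zero_Icc :
    ∃ U : ℕ → Set (Icc (0:ℝ) 1), Antitone U ∧ (∀ k, IsOpen (U k)) ∧ (∀ k, Dense (U k)) ∧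
      volume (⋂ k, U k) = 0 := by
  obtain ⟨U, hUa, hUo, hUd, hU⟩ :=
    exists_antitone_isOpen_dense_measure_iInter_eq_zero Real.disjoint_residual_ae
  refine ⟨fun k => (↑) ⁻¹' U k, fun k l hkl => preimage_mono (hUa hkl),
    fun k => (hUo k).preimage continuous_subtype_val,
    fun k => dense_preimage_val_of_subset_closure_interior Icc_zero_one_subset_closure_interior
      (by rw [(hUd k).closure_eq]; exact subset_univ _), ?_⟩
  rw [← preimage_iInter, unitInterval.volume_apply]
  exact measure_mono_null (image_preimage_subset _ _) hU

theorem stmt18 :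
    (∃ Ψm : (ℕ → ℕ) → Set (Set.Icc (0:ℝ) 1),
      ∃ Ψp : Set (Set.Icc (0:ℝ) 1) → (ℕ → ℕ),
      (∀ f, IsNowhereDense (Ψm f)) ∧
      ∀ f : ℕ → ℕ, ∀ A : Set (Set.Icc (0:ℝ) 1), IsNowhereDense A →
        volume (Ψm f \ A) = 0 → ∀ n, f n ≤ Ψp A n) ∧
    dominatingNumber ≤
      relCof {A : Set (Set.Icc (0:ℝ) 1) | volume A = 0}
        {A : Set (Set.Icc (0:ℝ) 1) | IsNowhereDense A} := by
  obtain ⟨J, hJo, hJd, hJne, hJ⟩ := exists_pairwise_disjoint_isOpen_dense_iUnion_Icc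
  obtain ⟨U, hUa, hUo, hUd, hU⟩ := exists_antitone_isOpen_dense_volume_iInter_eq_zero_Icc
  have hnwd := isNowhereDense_tukeyNwd hJo hJd hJ hUo hUd
  have hle : ∀ f A, IsNowhereDense A → volume (tukeyNwd J U f \ A) = 0 →
      ∀ n, f n ≤ tukeyBound volume J U A n :=
    fun f A hA hf n => le_tukeyBound hUa hf (exists_measure_diff_ne_zero hJo hJne hU hA n)
  exact ⟨⟨_, _, hnwd, hle⟩, dominatingNumber_le_relCof measure_empty _ _ hnwd
    fun f A hA hf => Eventually.of_forall (hle f A hA hf)⟩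
end

section
/- If I is a maximal ideal on an infinite set X, then cof(I) > non(I), where non(I) = min{|A| : A ⊆ X, A ∉ I} and cof(I) = min{|B| : B ⊆ I cofinal in (I,⊆)}. -/
open Cardinal Set MeasureTheory Filter

noncomputable def idealCof {X : Type*} (I : Set (Set X)) : Cardinal :=
  sInf {c | ∃ ℬ : Set (Set X), ℬ ⊆ I ∧ Cardinal.mk ℬ = c ∧
    ∀ I₀ ∈ I, ∃ B ∈ ℬ, I₀ ⊆ B}

noncomputable def idealNon {X : Type*} (I : Set (Set X)) : Cardinal :=
  sInf {c | ∃ A : Set X, A ∉ I ∧ Cardinal.mk A = c}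

theorem stmt19 {X : Type*} [Infinite X] (I : Set (Set X))
    (hI : IsIdealOn I) (hmax : ∀ A : Set X, A ∈ I ∨ Aᶜ ∈ I) :
    idealNon I < idealCof I := by
  obtain ⟨hdown, hunion, huniv, hfin⟩ := hI
  -- sets of cardinality < idealNon I are in I
  have hsmall : ∀ S : Set X, Cardinal.mk S < idealNon I → S ∈ I := by
    intro S hS
    by_contra hSI
    simp only [idealNon] at hS
    have hmem : Cardinal.mk S ∈ {c | ∃ A : Set X, A ∉ I ∧ Cardinal.mk A = c} := ⟨S, hSI, rfl⟩
    exact absurd (csInf_le' hmem) (not_le.2 hS)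
  -- complements of ideal sets are nonempty (indeed infinite)
  have hcompl : ∀ S ∈ I, (Sᶜ : Set X).Infinite := by
    intro S hS
    by_contra hfin'
    rw [Set.not_infinite] at hfin'
    have := hunion S hS Sᶜ (hfin _ hfin')
    rw [Set.union_compl_self] at this
    exact huniv this
  by_contra hlt
  push_neg at hlt
  -- get a witness for cof
  have hne : {c | ∃ ℬ : Set (Set X), ℬ ⊆ I ∧ Cardinal.mk ℬ = c ∧
      ∀ I₀ ∈ I, ∃ B ∈ ℬ, I₀ ⊆ B}.Nonempty :=
    ⟨Cardinal.mk I, I, Subset.rfl, rfl, fun I₀ h => ⟨I₀, h, Subset.rfl⟩⟩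
  obtain ⟨ℬ, hBI, hBcard, hBcof⟩ := csInf_mem hne
  set κ := idealCof I with hκ
  -- index type
  let ι := κ.ord.ToType
  have hmkι : Cardinal.mk ι = κ := Cardinal.mk_ord_toType κ
  have hBκ : Cardinal.mk ℬ = κ := hBcard
  have e : ι ≃ ℬ := Classical.choice (Cardinal.eq.1 (hmkι.trans hBκ.symm))
  -- transfinite recursion picking two fresh points below each index
  have hIio : ∀ i : ι, Cardinal.mk (Set.Iio i) < κ := fun i => Cardinal.mk_Iio_ord_toType i
  have key : ∀ (i : ι) (rec : ∀ j, j < i → X × X),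
      ∃ p : X × X, p.1 ≠ p.2 ∧ p.1 ∉ (e i : Set X) ∧ p.2 ∉ (e i : Set X) ∧
        ∀ j (hj : j < i), p.1 ≠ (rec j hj).1 ∧ p.1 ≠ (rec j hj).2 ∧
          p.2 ≠ (rec j hj).1 ∧ p.2 ≠ (rec j hj).2 := by
    intro i rec
    set T : Set X := (e i : Set X) ∪
      ((fun j : Set.Iio i => (rec j j.2).1) '' Set.univ ∪
       (fun j : Set.Iio i => (rec j j.2).2) '' Set.univ) with hT
    have hT1 : ((fun j : Set.Iio i => (rec j j.2).1) '' Set.univ) ∈ I := by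
      apply hsmall
      calc Cardinal.mk _ ≤ Cardinal.mk (Set.Iio i) := Cardinal.mk_image_le.trans (by simp)
        _ < κ := hIio i
        _ ≤ idealNon I := hlt
    have hT2 : ((fun j : Set.Iio i => (rec j j.2).2) '' Set.univ) ∈ I := by
      apply hsmall
      calc Cardinal.mk _ ≤ Cardinal.mk (Set.Iio i) := Cardinal.mk_image_le.trans (by simp)
        _ < κ := hIio i
        _ ≤ idealNon I := hlt
    have hTI : T ∈ I := hunion _ (hBI (e i).2) _ (hunion _ hT1 _ hT2)
    obtain ⟨x, hx, y, hy, hxy⟩ := (hcompl T hTI).nontrivial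
    refine ⟨(x, y), hxy, ?_, ?_, ?_⟩
    · exact fun h => hx (Or.inl h)
    · exact fun h => hy (Or.inl h)
    · intro j hj
      refine ⟨?_, ?_, ?_, ?_⟩ <;> intro h
      · exact hx (Or.inr (Or.inl ⟨⟨j, hj⟩, trivial, h.symm⟩))
      · exact hx (Or.inr (Or.inr ⟨⟨j, hj⟩, trivial, h.symm⟩))
      · exact hy (Or.inr (Or.inl ⟨⟨j, hj⟩, trivial, h.symm⟩))
      · exact hy (Or.inr (Or.inr ⟨⟨j, hj⟩, trivial, h.symm⟩))
  -- define g by well-founded recursion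
  let g : ι → X × X := fun i =>
    (IsWellFounded.wf (r := ((· < ·) : ι → ι → Prop))).fix
      (fun i rec => Classical.choose (key i rec)) i
  have hg : ∀ i : ι, g i = Classical.choose (key i (fun j _ => g j)) := fun i =>
    (IsWellFounded.wf (r := ((· < ·) : ι → ι → Prop))).fix_eq _ i
  have hgspec : ∀ i : ι, (g i).1 ≠ (g i).2 ∧ (g i).1 ∉ (e i : Set X) ∧
      (g i).2 ∉ (e i : Set X) ∧ ∀ j (hj : j < i), (g i).1 ≠ (g j).1 ∧
        (g i).1 ≠ (g j).2 ∧ (g i).2 ≠ (g j).1 ∧ (g i).2 ≠ (g j).2 := by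
    intro i
    rw [hg i]
    exact Classical.choose_spec (key i (fun j _ => g j))
  -- E is the range of first components
  set E : Set X := Set.range (fun i => (g i).1) with hE
  -- second components are not in E
  have hyE : ∀ i : ι, (g i).2 ∉ E := by
    rintro i ⟨j, hj⟩
    simp only at hj
    rcases lt_trichotomy j i with h | h | h
    · exact ((hgspec i).2.2.2 j h).2.2.1 hj.symm
    · rw [h] at hj; exact (hgspec i).1 hj
    · exact ((hgspec j).2.2.2 i h).2.1 hj
  -- E is not a subset of any e i
  have hnotsub : ∀ i : ι, ¬ E ⊆ (e i : Set X) := fun i h =>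
    (hgspec i).2.1 (h ⟨i, rfl⟩)
  rcases hmax E with hEI | hEcI
  · obtain ⟨B, hB, hEB⟩ := hBcof E hEI
    exact hnotsub (e.symm ⟨B, hB⟩) (by rwa [e.apply_symm_apply])
  · obtain ⟨B, hB, hEB⟩ := hBcof Eᶜ hEcI
    set i := e.symm ⟨B, hB⟩
    have hEB' : Eᶜ ⊆ (e i : Set X) := by rwa [e.apply_symm_apply]
    exact (hgspec i).2.2.1 (hEB' (hyE i))
end
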